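/- With notation as in the construction: for any integers k, ℓ ≥ 1 and any standard rectangle R = I × J, there exists a nonempty rectangle E × F ⊆ I_{(ℓ)} × J_{(k)} that is disjoint from every standard rectangle R' with p_{R'} ≠ p_R. In particular, every point z ∈ E × F satisfies dist_H(q, z)² ≥ 2^{-2m-1} for all q ∈ P with q ≠ p_R. -/

import Mathlib

/-!
Let `N = -2m-2`, so that standard rectangles have area `2^N`. A standard rectangle `I' × J'`
meeting `I_{(ℓ)} × J_{(k)}` but not containing `p` cannot contain both parents of `I_{(ℓ)}` and
`J_{(k)}`, so one side, say `I'`, is no longer than `I_{(ℓ)}`; then `J' ⊇ J` contains `p.2`.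
If `|I'| = |I_{(ℓ)}|`, the point of `P` in `I' × J'` and `p` both lie in the rectangle
(parent of `I_{(ℓ)}`) × `J'` of area `2^{N+1}`, so they coincide, which is absurd.
If `|I'| = 2^s < |I_{(ℓ)}|`, separation leaves in each dyadic interval of length `2^{s+1}` at most
one first coordinate of a point of `P` in the horizontal band of height `2^{N-s}` through `p`.
Descending from `I_{(ℓ)}` one generation at a time, we can thus always step into a child avoiding
these coordinates; the interval `E` reached at length `min(2^N, |I_{(ℓ)}|)` meets no such `I'`.
The same descent in the second coordinate gives `F`.

For the distance bound, a dyadic rectangle of area `< 2^{-2m-1}` through `q` and `z ∈ E × F`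
enlarges inside `[0,1)²` to a standard rectangle through both, which cannot contain `p` by
separation, hence cannot contain `z`.
-/

open MeasureTheory
open scoped ENNReal

/-- A dyadic interval `[k·2^n, (k+1)·2^n)`. -/
def IsDyadicInterval (I : Set ℝ) : Prop :=
  ∃ k n : ℤ, I = Set.Ico ((k : ℝ) * 2 ^ n) (((k : ℝ) + 1) * 2 ^ n)

/-- An axis-parallel dyadic rectangle in the plane. -/
def IsDyadicRect (R : Set (ℝ × ℝ)) : Prop :=
  ∃ I J : Set ℝ, IsDyadicInterval I ∧ IsDyadicInterval J ∧ R = I ×ˢ J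

/-- `dist_H(p,q)² = inf { |R| : R dyadic rectangle containing p and q }`. -/
noncomputable def distH2 (p q : ℝ × ℝ) : ℝ≥0∞ :=
  sInf {v | ∃ R : Set (ℝ × ℝ), IsDyadicRect R ∧ p ∈ R ∧ q ∈ R ∧ v = volume R}

def unitSq : Set (ℝ × ℝ) := Set.Ico (0 : ℝ) 1 ×ˢ Set.Ico (0 : ℝ) 1

/-- A standard rectangle: a dyadic rectangle in `[0,1)²` of area `2^{-2m-2}`
containing a point of `P`. -/
def IsStdRect (m : ℕ) (P : Finset (ℝ × ℝ)) (T : Set (ℝ × ℝ)) : Prop :=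
  IsDyadicRect T ∧ T ⊆ unitSq ∧
    volume T = (2 : ℝ≥0∞) ^ (-(2 * (m : ℤ)) - 2) ∧ ∃ q ∈ P, q ∈ T

open Set

section Dyadic

def dyadic (a n : ℤ) : Set ℝ := Ico ((a : ℝ) * 2 ^ n) (((a : ℝ) + 1) * 2 ^ n)

lemma isDyadicInterval_iff {I : Set ℝ} : IsDyadicInterval I ↔ ∃ a n, I = dyadic a n := Iff.rfl

lemma mem_dyadic_iff {x : ℝ} {a n : ℤ} : x ∈ dyadic a n ↔ ⌊x / 2 ^ n⌋ = a := by
  have h : (0 : ℝ) < 2 ^ n := zpow_pos two_pos n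
  rw [Int.floor_eq_iff, le_div_iff₀ h, div_lt_iff₀ h]
  rfl

lemma dyadic_nonempty (a n : ℤ) : (dyadic a n).Nonempty :=
  ⟨a * 2 ^ n, mem_dyadic_iff.2 <| by
    rw [mul_div_cancel_right₀ _ (zpow_ne_zero n two_ne_zero), Int.floor_intCast]⟩

lemma eq_of_mem_dyadic {x : ℝ} {a b n : ℤ} (ha : x ∈ dyadic a n) (hb : x ∈ dyadic b n) : a = b :=
  (mem_dyadic_iff.1 ha).symm.trans (mem_dyadic_iff.1 hb)

lemma dyadic_subset_dyadic_ediv_two (a n : ℤ) : dyadic a n ⊆ dyadic (a / 2) (n + 1) := by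
  intro x hx
  rw [mem_dyadic_iff] at hx ⊢
  rw [zpow_add_one₀ two_ne_zero, ← div_div, ← hx]
  exact_mod_cast Int.floor_div_natCast (x / 2 ^ n) 2

lemma exists_dyadic_superset (a : ℤ) {e f : ℤ} (h : e ≤ f) : ∃ c, dyadic a e ⊆ dyadic c f := by
  induction f, h using Int.leInduction with
  | base => exact ⟨a, subset_rfl⟩
  | succ f _ ih =>
    obtain ⟨c, hc⟩ := ih
    exact ⟨c / 2, hc.trans (dyadic_subset_dyadic_ediv_two c f)⟩

lemma dyadic_subset_of_le {x : ℝ} {a b e f : ℤ} (h : e ≤ f) (ha : x ∈ dyadic a e)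
    (hb : x ∈ dyadic b f) : dyadic a e ⊆ dyadic b f := by
  obtain ⟨c, hc⟩ := exists_dyadic_superset a h
  rwa [eq_of_mem_dyadic (hc ha) hb] at hc

lemma two_zpow_le_two_zpow_iff {a b : ℤ} : (2 : ℝ≥0∞) ^ a ≤ 2 ^ b ↔ a ≤ b := by
  rw [← ENNReal.coe_two, ← ENNReal.coe_zpow two_ne_zero, ← ENNReal.coe_zpow two_ne_zero,
    ENNReal.coe_le_coe, zpow_le_zpow_iff_right₀ one_lt_two]

lemma two_zpow_injective : Function.Injective fun n : ℤ => (2 : ℝ≥0∞) ^ n :=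
  fun _ _ h => le_antisymm (two_zpow_le_two_zpow_iff.1 h.le) (two_zpow_le_two_zpow_iff.1 h.ge)

lemma volume_dyadic (a n : ℤ) : volume (dyadic a n) = 2 ^ n := by
  rw [dyadic, Real.volume_Ico, ← sub_mul, add_sub_cancel_left, one_mul, ENNReal.ofReal,
    Real.toNNReal_zpow zero_le_two, ENNReal.coe_zpow (by simp)]
  simp

lemma volume_dyadic_prod (a n b e : ℤ) :
    volume (dyadic a n ×ˢ dyadic b e) = 2 ^ (n + e) := by
  rw [Measure.volume_eq_prod, Measure.prod_prod, volume_dyadic, volume_dyadic,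
    ENNReal.zpow_add two_ne_zero ENNReal.ofNat_ne_top]

lemma le_of_dyadic_subset {a b e f : ℤ} (h : dyadic a e ⊆ dyadic b f) : e ≤ f :=
  two_zpow_le_two_zpow_iff.1 (by simpa only [volume_dyadic] using measure_mono (μ := volume) h)

lemma unitSq_eq : unitSq = dyadic 0 0 ×ˢ dyadic 0 0 := by
  simp [unitSq, dyadic]

lemma exists_dyadic_mem_mem {x y : ℝ} (hx : x ∈ dyadic 0 0) (hy : y ∈ dyadic 0 0) {c e f : ℤ}
    (hxc : x ∈ dyadic c e) (hyc : y ∈ dyadic c e) (hf : e ≤ f ∨ 0 ≤ f) :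
    ∃ c', x ∈ dyadic c' f ∧ y ∈ dyadic c' f := by
  obtain ⟨c₀, e₀, he₀, hx₀, hy₀⟩ : ∃ c₀ e₀, e₀ ≤ f ∧ x ∈ dyadic c₀ e₀ ∧ y ∈ dyadic c₀ e₀ := by
    rcases hf with hf | hf
    exacts [⟨c, e, hf, hxc, hyc⟩, ⟨0, 0, hf, hx, hy⟩]
  obtain ⟨c', hc'⟩ := exists_dyadic_superset c₀ he₀
  exact ⟨c', hc' hx₀, hc' hy₀⟩

lemma mem_dyadic_parent {I : Set ℝ} (hI : IsDyadicInterval I) {a n : ℤ} (haI : dyadic a n ⊆ I)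
    (hvol : volume I = 2 * volume (dyadic a n)) {x : ℝ} (hx : x ∈ I) :
    x ∈ dyadic (a / 2) (n + 1) := by
  obtain ⟨c, e, rfl⟩ := isDyadicInterval_iff.1 hI
  obtain rfl : e = n + 1 := two_zpow_injective <| by
    rw [volume_dyadic, volume_dyadic] at hvol
    change 2 ^ e = 2 ^ (n + 1)
    rw [hvol, ENNReal.zpow_add two_ne_zero ENNReal.ofNat_ne_top, zpow_one, mul_comm]
  obtain ⟨y, hy⟩ := dyadic_nonempty a n
  rwa [← eq_of_mem_dyadic (haI hy) (dyadic_subset_dyadic_ediv_two a n hy)]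

end Dyadic

section Descent

lemma dyadic_child_subset (b n : ℤ) {i : ℤ} (hi₀ : 0 ≤ i) (hi₁ : i < 2) :
    dyadic (2 * b + i) (n - 1) ⊆ dyadic b n := by
  have h := dyadic_subset_dyadic_ediv_two (2 * b + i) (n - 1)
  rwa [sub_add_cancel, show (2 * b + i) / 2 = b by omega] at h

lemma exists_dyadic_child_disjoint {B : Set ℝ} (b n : ℤ) (hB : (B ∩ dyadic b n).Subsingleton) :
    ∃ b', dyadic b' (n - 1) ⊆ dyadic b n ∧ Disjoint (dyadic b' (n - 1)) B := by
  have h₀ := dyadic_child_subset b n (i := 0) le_rfl two_pos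
  have h₁ := dyadic_child_subset b n (i := 1) zero_le_one one_lt_two
  rw [add_zero] at h₀
  by_cases hd : Disjoint (dyadic (2 * b) (n - 1)) B
  · exact ⟨2 * b, h₀, hd⟩
  refine ⟨2 * b + 1, h₁, disjoint_left.2 fun y hy hyB => ?_⟩
  obtain ⟨x, hx, hxB⟩ := not_disjoint_iff.1 hd
  obtain rfl : x = y := hB ⟨hxB, h₀ hx⟩ ⟨hyB, h₁ hy⟩
  have := eq_of_mem_dyadic hx hy
  omega

lemma exists_dyadic_subset_forall_disjoint (B : ℤ → Set ℝ) (a : ℤ) {f n : ℤ} (hf : f ≤ n)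
    (hB : ∀ s c, f ≤ s → s < n → (B s ∩ dyadic c (s + 1)).Subsingleton) :
    ∃ b, dyadic b f ⊆ dyadic a n ∧
      ∀ s c, f ≤ s → s < n → dyadic b f ⊆ dyadic c s → Disjoint (dyadic c s) (B s) := by
  induction f, hf using Int.leInductionDown with
  | base => exact ⟨a, subset_rfl, fun s c h₁ h₂ => absurd h₂ (not_lt.2 h₁)⟩
  | pred f hf ih =>
    obtain ⟨b, hba, hb⟩ := ih fun s c h₁ h₂ => hB s c (by omega) h₂
    obtain ⟨b', hb'b, hb'⟩ :=
      exists_dyadic_child_disjoint b f (by simpa using hB (f - 1) b le_rfl (by omega))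
    refine ⟨b', hb'b.trans hba, fun s c hs₁ hs₂ hb'c => ?_⟩
    obtain ⟨x, hx⟩ := dyadic_nonempty b' (f - 1)
    rcases (by omega : s = f - 1 ∨ f ≤ s) with rfl | hs
    · rwa [eq_of_mem_dyadic (hb'c hx) hx]
    · exact hb s c hs hs₂ (dyadic_subset_of_le hs (hb'b hx) (hb'c hx))

end Descent

section Strips

def DyadicSeparated (N : ℤ) (Q : Set (ℝ × ℝ)) : Prop :=
  ∀ c₁ e₁ c₂ e₂ : ℤ, e₁ + e₂ ≤ N → (Q ∩ dyadic c₁ e₁ ×ˢ dyadic c₂ e₂).Subsingleton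

lemma DyadicSeparated.preimage_swap {N : ℤ} {Q : Set (ℝ × ℝ)} (hQ : DyadicSeparated N Q) :
    DyadicSeparated N (Prod.swap ⁻¹' Q) := by
  intro c₁ e₁ c₂ e₂ he
  rw [← preimage_swap_prod, ← preimage_inter]
  exact (hQ c₂ e₂ c₁ e₁ (by omega)).preimage Prod.swap_injective

def AvoidsStrips (Q : Set (ℝ × ℝ)) (N n : ℤ) (y : ℝ) (E : Set ℝ) : Prop :=
  ∀ c s c' t, s + t = N → t ≤ 0 → s ≤ n → (E ∩ dyadic c s).Nonempty → y ∈ dyadic c' t →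
    Disjoint (dyadic c s ×ˢ dyadic c' t) Q

lemma AvoidsStrips.of_preimage_swap {Q : Set (ℝ × ℝ)} {N n : ℤ} {x : ℝ} {F : Set ℝ}
    (h : AvoidsStrips (Prod.swap ⁻¹' Q) N n x F) {c s c' t : ℤ} (hst : s + t = N) (ht : t ≤ 0)
    (hs : s ≤ n) (hF : (F ∩ dyadic c s).Nonempty) (hx : x ∈ dyadic c' t) :
    Disjoint (dyadic c' t ×ˢ dyadic c s) Q := by
  simpa [preimage_preimage] using (h c s c' t hst ht hs hF hx).preimage Prod.swap

lemma DyadicSeparated.exists_avoidsStrips {N : ℤ} {Q : Set (ℝ × ℝ)}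
    (hQ : DyadicSeparated (N + 1) Q) {p : ℝ × ℝ} (hp : p ∈ Q) {a n : ℤ}
    (hp₁ : p.1 ∈ dyadic (a / 2) (n + 1) \ dyadic a n) :
    ∃ b, dyadic b (min n N) ⊆ dyadic a n ∧ AvoidsStrips Q N n p.2 (dyadic b (min n N)) := by
  let B s := Prod.fst '' (Q ∩ univ ×ˢ dyadic ⌊p.2 / 2 ^ (N - s)⌋ (N - s))
  have hB : ∀ s c, min n N ≤ s → s < n → (B s ∩ dyadic c (s + 1)).Subsingleton := by
    rintro s c - - _ ⟨⟨q, ⟨hq, -, hq₂⟩, rfl⟩, hq₁⟩ _ ⟨⟨q', ⟨hq', -, hq'₂⟩, rfl⟩, hq'₁⟩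
    exact congrArg Prod.fst (hQ c (s + 1) _ (N - s) (by omega) ⟨hq, hq₁, hq₂⟩ ⟨hq', hq'₁, hq'₂⟩)
  obtain ⟨b, hba, hb⟩ := exists_dyadic_subset_forall_disjoint B a (min_le_left n N) hB
  refine ⟨b, hba, fun c s c' t hst ht hs₂ ⟨x, hxb, hxc⟩ hpc' => disjoint_right.2 ?_⟩
  obtain rfl : t = N - s := by omega
  rintro q hq ⟨hq₁, hq₂⟩
  have hbc : dyadic b (min n N) ⊆ dyadic c s := dyadic_subset_of_le (by omega) hxb hxc
  rcases hs₂.lt_or_eq with hsn | rfl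
  · rw [← mem_dyadic_iff.1 hpc'] at hq₂
    exact disjoint_left.1 (hb s c (by omega) hsn hbc) hq₁ ⟨q, ⟨hq, mem_univ _, hq₂⟩, rfl⟩
  · obtain rfl : c = a := eq_of_mem_dyadic (hbc hxb) (hba hxb)
    have hqp : q = p := hQ _ (s + 1) c' (N - s) (by omega)
      ⟨hq, dyadic_subset_dyadic_ediv_two c s hq₁, hq₂⟩ ⟨hp, hp₁.1, hpc'⟩
    exact hp₁.2 (hqp ▸ hq₁)

end Strips

section StdRect

variable {m : ℕ} {P : Finset (ℝ × ℝ)}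

lemma dyadicSeparated_of_le_volume
    (hP : ∀ p ∈ P, ∀ q ∈ P, p ≠ q → ∀ R : Set (ℝ × ℝ), IsDyadicRect R →
      p ∈ R → q ∈ R → (2 : ℝ≥0∞) ^ (-(2 * (m : ℤ))) ≤ volume R) :
    DyadicSeparated (-(2 * (m : ℤ)) - 1) ↑P := by
  rintro c₁ e₁ c₂ e₂ he p ⟨hp, hpR⟩ q ⟨hq, hqR⟩
  by_contra hpq
  have h := hP p hp q hq hpq (dyadic c₁ e₁ ×ˢ dyadic c₂ e₂)
    ⟨_, _, ⟨c₁, e₁, rfl⟩, ⟨c₂, e₂, rfl⟩, rfl⟩ hpR hqR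
  rw [volume_dyadic_prod, two_zpow_le_two_zpow_iff] at h
  omega

lemma IsStdRect.scales {c₁ e₁ c₂ e₂ : ℤ} (h : IsStdRect m P (dyadic c₁ e₁ ×ˢ dyadic c₂ e₂)) :
    e₁ ≤ 0 ∧ e₂ ≤ 0 ∧ e₁ + e₂ = -(2 * (m : ℤ)) - 2 := by
  obtain ⟨-, hU, hvol, -⟩ := h
  rw [unitSq_eq, prod_subset_prod_iff] at hU
  rw [volume_dyadic_prod] at hvol
  rcases hU with ⟨h₁, h₂⟩ | h | h
  · exact ⟨le_of_dyadic_subset h₁, le_of_dyadic_subset h₂, two_zpow_injective hvol⟩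
  all_goals exact absurd h (dyadic_nonempty _ _).ne_empty

lemma isStdRect_of_mem {q : ℝ × ℝ} {c₁ e₁ c₂ e₂ : ℤ} (he₁ : e₁ ≤ 0) (he₂ : e₂ ≤ 0)
    (he : e₁ + e₂ = -(2 * (m : ℤ)) - 2) (hq : q ∈ P) (hqU : q ∈ unitSq)
    (hqR : q ∈ dyadic c₁ e₁ ×ˢ dyadic c₂ e₂) : IsStdRect m P (dyadic c₁ e₁ ×ˢ dyadic c₂ e₂) := by
  rw [unitSq_eq] at hqU
  refine ⟨⟨_, _, ⟨c₁, e₁, rfl⟩, ⟨c₂, e₂, rfl⟩, rfl⟩, ?_, by rw [volume_dyadic_prod, he], q, hq, hqR⟩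
  rw [unitSq_eq]
  exact prod_mono (dyadic_subset_of_le he₁ hqR.1 hqU.1) (dyadic_subset_of_le he₂ hqR.2 hqU.2)

lemma disjoint_stdRect_of_avoidsStrips {p : ℝ × ℝ} {aI nI aJ nJ aL nL aK nK : ℤ}
    (hN : nI + nJ = -(2 * (m : ℤ)) - 2) (hpR : p ∈ dyadic aI nI ×ˢ dyadic aJ nJ)
    (hLI : dyadic aL nL ⊆ dyadic aI nI) (hp₁ : p.1 ∈ dyadic (aL / 2) (nL + 1))
    (hKJ : dyadic aK nK ⊆ dyadic aJ nJ) (hp₂ : p.2 ∈ dyadic (aK / 2) (nK + 1))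
    {E F : Set ℝ} (hE : E ⊆ dyadic aL nL) (hF : F ⊆ dyadic aK nK)
    (hEs : AvoidsStrips ↑P (-(2 * (m : ℤ)) - 2) nL p.2 E)
    (hFs : AvoidsStrips (Prod.swap ⁻¹' ↑P) (-(2 * (m : ℤ)) - 2) nK p.1 F)
    ⦃R : Set (ℝ × ℝ)⦄ (hR : IsStdRect m P R) (hpR' : p ∉ R) : Disjoint (E ×ˢ F) R := by
  obtain ⟨I', J', hI', hJ', rfl⟩ := hR.1
  obtain ⟨c₁, e₁, rfl⟩ := isDyadicInterval_iff.1 hI'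
  obtain ⟨c₂, e₂, rfl⟩ := isDyadicInterval_iff.1 hJ'
  obtain ⟨he₁, he₂, he⟩ := hR.scales
  obtain ⟨q, hq, hqR⟩ := hR.2.2.2
  have hnL := le_of_dyadic_subset hLI
  have hnK := le_of_dyadic_subset hKJ
  refine disjoint_left.2 fun ⟨x, y⟩ ⟨hx, hy⟩ ⟨hx', hy'⟩ => ?_
  rcases le_or_gt e₁ nL with h₁ | h₁
  · have hpc₂ : p.2 ∈ dyadic c₂ e₂ := dyadic_subset_of_le (by omega) (hKJ (hF hy)) hy' hpR.2
    exact disjoint_left.1 (hEs c₁ e₁ c₂ e₂ he he₂ h₁ ⟨x, hx, hx'⟩ hpc₂) hqR hq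
  rcases le_or_gt e₂ nK with h₂ | h₂
  · have hpc₁ : p.1 ∈ dyadic c₁ e₁ := dyadic_subset_of_le (by omega) (hLI (hE hx)) hx' hpR.1
    have hdisj := hFs.of_preimage_swap (by omega) he₁ h₂ ⟨y, hy, hy'⟩ hpc₁
    exact disjoint_left.1 hdisj hqR hq
  exact hpR' ⟨dyadic_subset_of_le h₁ (dyadic_subset_dyadic_ediv_two aL nL (hE hx)) hx' hp₁,
    dyadic_subset_of_le h₂ (dyadic_subset_dyadic_ediv_two aK nK (hF hy)) hy' hp₂⟩

lemma le_distH2_of_forall_not_mem_stdRect (hPU : (↑P : Set (ℝ × ℝ)) ⊆ unitSq)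
    (hsep : DyadicSeparated (-(2 * (m : ℤ)) - 1) ↑P) {p z : ℝ × ℝ} (hp : p ∈ P)
    (hzU : z ∈ unitSq) (hz : ∀ R, IsStdRect m P R → p ∉ R → z ∉ R) {q : ℝ × ℝ} (hq : q ∈ P)
    (hqp : q ≠ p) : (2 : ℝ≥0∞) ^ (-(2 * (m : ℤ)) - 1) ≤ distH2 q z := by
  refine le_sInf ?_
  rintro _ ⟨T, ⟨I', J', hI', hJ', rfl⟩, hqT, hzT, rfl⟩
  obtain ⟨c₁, e₁, rfl⟩ := isDyadicInterval_iff.1 hI'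
  obtain ⟨c₂, e₂, rfl⟩ := isDyadicInterval_iff.1 hJ'
  rw [volume_dyadic_prod, two_zpow_le_two_zpow_iff]
  by_contra! hlt
  have hqU := hPU hq
  rw [unitSq_eq] at hqU hzU
  set f₁ := max (min e₁ 0) (-(2 * (m : ℤ)) - 2)
  obtain ⟨c₁', hq₁, hz₁⟩ := exists_dyadic_mem_mem (f := f₁) hqU.1 hzU.1 hqT.1 hzT.1 (by omega)
  obtain ⟨c₂', hq₂, hz₂⟩ := exists_dyadic_mem_mem (f := -(2 * (m : ℤ)) - 2 - f₁)
    hqU.2 hzU.2 hqT.2 hzT.2 (by omega)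
  have hT := isStdRect_of_mem (m := m) (by omega) (by omega) (by omega) hq (hPU hq) ⟨hq₁, hq₂⟩
  by_cases hpT : p ∈ dyadic c₁' f₁ ×ˢ dyadic c₂' (-(2 * (m : ℤ)) - 2 - f₁)
  · exact hqp (hsep _ _ _ _ (by omega) ⟨hq, hq₁, hq₂⟩ ⟨hp, hpT⟩)
  · exact hz _ hT hpT ⟨hz₁, hz₂⟩

end StdRect

theorem stmt15_general (m : ℕ) (P : Finset (ℝ × ℝ))
    (hPsub : (↑P : Set (ℝ × ℝ)) ⊆ unitSq)
    (hP2 : ∀ p ∈ P, ∀ q ∈ P, p ≠ q → ∀ R : Set (ℝ × ℝ), IsDyadicRect R →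
      p ∈ R → q ∈ R → (2 : ℝ≥0∞) ^ (-(2 * (m : ℤ))) ≤ volume R)
    (I J : Set ℝ) (hI : IsDyadicInterval I) (hJ : IsDyadicInterval J)
    (hRstd : IsStdRect m P (I ×ˢ J))
    (p : ℝ × ℝ) (hpP : p ∈ P) (hpR : p ∈ I ×ˢ J)
    -- `Iℓ = I_{(ℓ)}`
    (Iℓ : Set ℝ) (hIℓ : IsDyadicInterval Iℓ) (hIℓI : Iℓ ⊆ I)
    (hIℓp : p.1 ∉ Iℓ)
    (hIℓpar : ∃ Ihat : Set ℝ, IsDyadicInterval Ihat ∧ Iℓ ⊆ Ihat ∧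
      volume Ihat = 2 * volume Iℓ ∧ p.1 ∈ Ihat)
    -- `Jk = J_{(k)}`
    (Jk : Set ℝ) (hJk : IsDyadicInterval Jk) (hJkJ : Jk ⊆ J)
    (hJkp : p.2 ∉ Jk)
    (hJkpar : ∃ Jhat : Set ℝ, IsDyadicInterval Jhat ∧ Jk ⊆ Jhat ∧
      volume Jhat = 2 * volume Jk ∧ p.2 ∈ Jhat) :
    ∃ E F : Set ℝ, IsDyadicInterval E ∧ IsDyadicInterval F ∧
      (E ×ˢ F).Nonempty ∧ E ×ˢ F ⊆ Iℓ ×ˢ Jk ∧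
      (∀ R' : Set (ℝ × ℝ), IsStdRect m P R' → (∀ q ∈ P, q ∈ R' → q ≠ p) →
        Disjoint (E ×ˢ F) R') ∧
      (∀ z ∈ E ×ˢ F, ∀ q ∈ P, q ≠ p →
        (2 : ℝ≥0∞) ^ (-(2 * (m : ℤ)) - 1) ≤ distH2 q z) := by
  obtain ⟨aI, nI, rfl⟩ := isDyadicInterval_iff.1 hI
  obtain ⟨aJ, nJ, rfl⟩ := isDyadicInterval_iff.1 hJ
  obtain ⟨aL, nL, rfl⟩ := isDyadicInterval_iff.1 hIℓ
  obtain ⟨aK, nK, rfl⟩ := isDyadicInterval_iff.1 hJk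
  obtain ⟨Ihat, hIhat, hLhat, hvolI, hp₁⟩ := hIℓpar
  obtain ⟨Jhat, hJhat, hKhat, hvolJ, hp₂⟩ := hJkpar
  replace hp₁ := mem_dyadic_parent hIhat hLhat hvolI hp₁
  replace hp₂ := mem_dyadic_parent hJhat hKhat hvolJ hp₂
  have hsep := dyadicSeparated_of_le_volume hP2
  have hsep' : DyadicSeparated (-(2 * (m : ℤ)) - 2 + 1) ↑P := by convert hsep using 1; ring
  obtain ⟨bE, hE, hEs⟩ := hsep'.exists_avoidsStrips (Finset.mem_coe.2 hpP) ⟨hp₁, hIℓp⟩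
  obtain ⟨bF, hF, hFs⟩ :=
    hsep'.preimage_swap.exists_avoidsStrips (p := p.swap) (by simpa using hpP) ⟨hp₂, hJkp⟩
  have hdisj := disjoint_stdRect_of_avoidsStrips hRstd.scales.2.2 hpR hIℓI hp₁ hJkJ hp₂
    hE hF hEs hFs
  have hEF : dyadic bE _ ×ˢ dyadic bF _ ⊆ dyadic aL nL ×ˢ dyadic aK nK := prod_mono hE hF
  refine ⟨_, _, ⟨bE, _, rfl⟩, ⟨bF, _, rfl⟩, (dyadic_nonempty _ _).prod (dyadic_nonempty _ _),
    hEF, fun R hR hpR => hdisj hR fun h => hpR p hpP h rfl, fun z hz q hq hqp => ?_⟩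
  exact le_distH2_of_forall_not_mem_stdRect hPsub hsep hpP
    (hRstd.2.1 (prod_mono hIℓI hJkJ (hEF hz))) (fun R hR hpR => disjoint_left.1 (hdisj hR hpR) hz)
    hq hqp

/-- Lemma (pointFinder2): for `k, ℓ ≥ 1` and a standard rectangle `R = I × J` with
point `p`, there is a nonempty dyadic rectangle `E × F ⊆ I_{(ℓ)} × J_{(k)}` disjoint
from every standard rectangle whose point of `P` differs from `p`; in particular
every `z ∈ E × F` satisfies `dist_H(q,z)² ≥ 2^{-2m-1}` for all `q ∈ P`, `q ≠ p`. -/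
theorem stmt15 (m : ℕ) (P : Finset (ℝ × ℝ))
    (hPsub : (↑P : Set (ℝ × ℝ)) ⊆ unitSq)
    (hP1 : ∀ R : Set (ℝ × ℝ), IsDyadicRect R → R ⊆ unitSq →
      volume R = (2 : ℝ≥0∞) ^ (-(2 * (m : ℤ)) - 1) → ∃! q, q ∈ P ∧ q ∈ R)
    (hP2 : ∀ p ∈ P, ∀ q ∈ P, p ≠ q → ∀ R : Set (ℝ × ℝ), IsDyadicRect R →
      p ∈ R → q ∈ R → (2 : ℝ≥0∞) ^ (-(2 * (m : ℤ))) ≤ volume R)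
    (I J : Set ℝ) (hI : IsDyadicInterval I) (hJ : IsDyadicInterval J)
    (hRstd : IsStdRect m P (I ×ˢ J))
    (p : ℝ × ℝ) (hpP : p ∈ P) (hpR : p ∈ I ×ˢ J)
    (k ℓ : ℕ) (hk : 1 ≤ k) (hℓ : 1 ≤ ℓ)
    -- `Iℓ = I_{(ℓ)}`
    (Iℓ : Set ℝ) (hIℓ : IsDyadicInterval Iℓ) (hIℓI : Iℓ ⊆ I)
    (hIℓvol : volume Iℓ = (2 : ℝ≥0∞) ^ (-(ℓ : ℤ)) * volume I)
    (hIℓp : p.1 ∉ Iℓ)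
    (hIℓpar : ∃ Ihat : Set ℝ, IsDyadicInterval Ihat ∧ Iℓ ⊆ Ihat ∧
      volume Ihat = 2 * volume Iℓ ∧ p.1 ∈ Ihat)
    -- `Jk = J_{(k)}`
    (Jk : Set ℝ) (hJk : IsDyadicInterval Jk) (hJkJ : Jk ⊆ J)
    (hJkvol : volume Jk = (2 : ℝ≥0∞) ^ (-(k : ℤ)) * volume J)
    (hJkp : p.2 ∉ Jk)
    (hJkpar : ∃ Jhat : Set ℝ, IsDyadicInterval Jhat ∧ Jk ⊆ Jhat ∧
      volume Jhat = 2 * volume Jk ∧ p.2 ∈ Jhat) :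
    ∃ E F : Set ℝ, IsDyadicInterval E ∧ IsDyadicInterval F ∧
      (E ×ˢ F).Nonempty ∧ E ×ˢ F ⊆ Iℓ ×ˢ Jk ∧
      (∀ R' : Set (ℝ × ℝ), IsStdRect m P R' → (∀ q ∈ P, q ∈ R' → q ≠ p) →
        Disjoint (E ×ˢ F) R') ∧
      (∀ z ∈ E ×ˢ F, ∀ q ∈ P, q ≠ p →
        (2 : ℝ≥0∞) ^ (-(2 * (m : ℤ)) - 1) ≤ distH2 q z) :=
  stmt15_general m P hPsub hP2 I J hI hJ hRstd p hpP hpR Iℓ hIℓ hIℓI hIℓp hIℓpar Jk hJk hJkJ hJkp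
    hJkpar
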